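/- arXiv:2001.01951 — 6 statements merged into one kernel-verified Lean document; each statement's English description precedes it below -/
import Mathlib

section
/- Let θ_1, ..., θ_d be real numbers such that {1, θ_1, ..., θ_d} is linearly independent over ℚ, and let N be a positive integer. Then the additive subgroup (1/N)(ℤ^d + (θ_1, ..., θ_d)ℤ) = {(1/N)(m + k·(θ_1,...,θ_d)) : m ∈ ℤ^d, k ∈ ℤ} is dense in ℝ^d. -/
/-!
Kronecker via Weyl equidistribution. Reduce `θ` modulo `ℤ^d` to a point `τ` of the torus
`𝕋^d = ℝ^d / ℤ^d`. Linear independence of `1, θ₁, …, θ_d` over `ℚ` says exactly that every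
nontrivial character `e_n` of `𝕋^d` satisfies `e_n τ ≠ 1`. The Birkhoff averages of `e_n` along the
rotation by `τ` are then `e_n(x)` times averages of a geometric progression of ratio `e_n τ`, so they
tend to `0 = ∫ e_n`. Since the averaging operators are `1`-Lipschitz in the sup norm and
trigonometric polynomials are dense in `C(𝕋^d, ℂ)` (Stone–Weierstrass), the averages of every
continuous function tend to its integral. A bump function on a ball missed by the orbit `ℕ • τ`
would have vanishing averages but positive integral, so the orbit is dense. Its preimage in `ℝ^d`
is `ℤ^d + ℕ θ`, which lies in `(1/N)(ℤ^d + ℤ θ)`.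
-/

open MeasureTheory Filter Topology Set UnitAddTorus

instance : IsProbabilityMeasure (volume : Measure UnitAddCircle) :=
  ⟨by simp [AddCircle.measure_univ]⟩

theorem tendsto_inv_mul_geom_sum_zero {𝕜 : Type*} [RCLike 𝕜] {z : 𝕜} (hz : ‖z‖ ≤ 1)
    (h1 : z ≠ 1) :
    Tendsto (fun K : ℕ => (K : 𝕜)⁻¹ * ∑ k ∈ Finset.range K, z ^ k) atTop (𝓝 0) := by
  have hbound (K : ℕ) :
      ‖(K : 𝕜)⁻¹ * ∑ k ∈ Finset.range K, z ^ k‖ ≤ (K : ℝ)⁻¹ * (2 / ‖z - 1‖) := by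
    rw [norm_mul, norm_inv, RCLike.norm_natCast, geom_sum_eq h1, norm_div]
    gcongr
    calc ‖z ^ K - 1‖ ≤ ‖z‖ ^ K + 1 := by simpa [norm_pow] using norm_sub_le (z ^ K) 1
      _ ≤ 2 := by linarith [pow_le_one₀ (norm_nonneg z) hz (n := K)]
  refine squeeze_zero_norm hbound ?_
  simpa using (tendsto_inv_atTop_zero.comp tendsto_natCast_atTop_atTop).mul_const (2 / ‖z - 1‖)

section BirkhoffAverage

variable {𝕜 α E : Type*} [RCLike 𝕜] [NormedAddCommGroup E] [NormedSpace 𝕜 E]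

theorem norm_birkhoffAverage_le (f : α → α) {g : α → E} {C : ℝ} (hg : ∀ y, ‖g y‖ ≤ C)
    (n : ℕ) (x : α) : ‖birkhoffAverage 𝕜 f g n x‖ ≤ C := by
  rcases eq_or_ne n 0 with rfl | hn
  · simpa using (norm_nonneg _).trans (hg x)
  rw [birkhoffAverage, birkhoffSum, norm_smul, norm_inv, RCLike.norm_natCast,
    inv_mul_le_iff₀ (by positivity)]
  calc ‖∑ k ∈ Finset.range n, g (f^[k] x)‖ ≤ ∑ k ∈ Finset.range n, ‖g (f^[k] x)‖ :=
        norm_sum_le _ _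
    _ ≤ n * C := by
      simpa using Finset.sum_le_sum fun k (_ : k ∈ Finset.range n) => hg (f^[k] x)

theorem ContinuousMap.lipschitzWith_one_birkhoffAverage [TopologicalSpace α]
    [CompactSpace α] (f : α → α) (n : ℕ) (x : α) :
    LipschitzWith 1 fun g : C(α, E) => birkhoffAverage 𝕜 f g n x :=
  LipschitzWith.of_dist_le_mul fun g h => by
    rw [dist_eq_norm, dist_eq_norm, NNReal.coe_one, one_mul]
    simpa [birkhoffAverage_sub] using
      norm_birkhoffAverage_le (𝕜 := 𝕜) f (fun y => (g - h).norm_coe_le_norm y) n x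

end BirkhoffAverage

section Integral

variable {X E : Type*} [TopologicalSpace X] [CompactSpace X] [MeasurableSpace X]
  [OpensMeasurableSpace X] [NormedAddCommGroup E]

theorem ContinuousMap.integrable (μ : Measure X) [IsFiniteMeasure μ] (g : C(X, E)) :
    Integrable g μ :=
  g.continuous.integrable_of_hasCompactSupport (HasCompactSupport.of_compactSpace _)

theorem ContinuousMap.lipschitzWith_one_integral [NormedSpace ℝ E] (μ : Measure X)
    [IsProbabilityMeasure μ] :
    LipschitzWith 1 fun g : C(X, E) => ∫ x, g x ∂μ :=
  LipschitzWith.of_dist_le_mul fun g h => by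
    rw [dist_eq_norm, dist_eq_norm, ← integral_sub (g.integrable μ) (h.integrable μ),
      NNReal.coe_one, one_mul]
    simpa using norm_integral_le_of_norm_le_const (μ := μ)
      (Eventually.of_forall fun y => (g - h).norm_coe_le_norm y)

end Integral

namespace UnitAddTorus

variable {d : Type*}

theorem dense_preimage_coe {s : Set (UnitAddTorus d)} (hs : Dense s) :
    Dense {x : d → ℝ | (fun i => (x i : UnitAddCircle)) ∈ s} :=
  hs.preimage (IsOpenMap.piMap (fun _ => QuotientAddGroup.isOpenMap_coe)
    (Eventually.of_forall fun _ => QuotientAddGroup.mk_surjective))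

theorem exists_int_eq_add_of_coe_eq_coe {x y : d → ℝ}
    (h : (fun i => (x i : UnitAddCircle)) = fun i => (y i : UnitAddCircle)) :
    ∃ m : d → ℤ, ∀ i, x i = m i + y i := by
  choose m hm using fun i => (AddCircle.coe_eq_zero_iff (1 : ℝ)).1
    (show ((x i - y i : ℝ) : UnitAddCircle) = 0 by simp [congrFun h i])
  exact ⟨m, fun i => by linarith [show (m i : ℝ) = x i - y i by simpa using hm i]⟩

variable [Fintype d]

theorem mFourier_apply_eq_toCircle (n : d → ℤ) (x : UnitAddTorus d) :
    mFourier n x = AddCircle.toCircle (∑ i, n i • x i) := by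
  classical
  simp only [mFourier, ContinuousMap.coe_mk, fourier_apply]
  induction (Finset.univ : Finset d) using Finset.induction_on with
  | empty => simp
  | insert i s hi ih =>
    rw [Finset.prod_insert hi, Finset.sum_insert hi, AddCircle.toCircle_add, Circle.coe_mul, ih]

theorem norm_mFourier_apply (n : d → ℤ) (x : UnitAddTorus d) : ‖mFourier n x‖ = 1 := by
  rw [mFourier_apply_eq_toCircle, Circle.norm_coe]

theorem mFourier_apply_add (n : d → ℤ) (x y : UnitAddTorus d) :
    mFourier n (x + y) = mFourier n x * mFourier n y := by
  simp only [mFourier_apply_eq_toCircle, Pi.add_apply, smul_add, Finset.sum_add_distrib,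
    AddCircle.toCircle_add, Circle.coe_mul]

theorem mFourier_apply_nsmul (n : d → ℤ) (k : ℕ) (x : UnitAddTorus d) :
    mFourier n (k • x) = mFourier n x ^ k := by
  simp only [mFourier_apply_eq_toCircle, Pi.smul_apply, smul_comm _ k, ← Finset.smul_sum,
    AddCircle.toCircle_nsmul, Circle.coe_pow]

theorem mFourier_apply_eq_one_iff (n : d → ℤ) (x : UnitAddTorus d) :
    mFourier n x = 1 ↔ ∑ i, n i • x i = 0 := by
  rw [mFourier_apply_eq_toCircle, ← Circle.coe_one, Circle.coe_inj,
    ← AddCircle.toCircle_zero (T := 1), (AddCircle.injective_toCircle one_ne_zero).eq_iff]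

theorem mFourier_coe_eq_one_iff (n : d → ℤ) (θ : d → ℝ) :
    mFourier n (fun i => (θ i : UnitAddCircle)) = 1 ↔ ∃ m : ℤ, ∑ i, n i • θ i = m := by
  rw [mFourier_apply_eq_one_iff]
  simp only [← QuotientAddGroup.mk_zsmul, ← QuotientAddGroup.mk_sum]
  rw [AddCircle.coe_eq_zero_iff]
  simp [eq_comm]

theorem integral_mFourier_of_apply_ne_one {n : d → ℤ} {τ : UnitAddTorus d}
    (hτ : mFourier n τ ≠ 1) : ∫ x, mFourier n x = 0 := by
  have hinv := integral_add_left_eq_self (μ := volume) (fun x => mFourier n x) τ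
  simp only [mFourier_apply_add, integral_const_mul] at hinv
  exact eq_zero_of_mul_eq_self_left hτ hinv

theorem birkhoffAverage_add_left_mFourier (τ : UnitAddTorus d) (n : d → ℤ) (K : ℕ)
    (x : UnitAddTorus d) :
    birkhoffAverage ℂ (τ + ·) (mFourier n) K x =
      ((K : ℂ)⁻¹ * ∑ k ∈ Finset.range K, mFourier n τ ^ k) * mFourier n x := by
  simp only [birkhoffAverage, birkhoffSum, add_left_iterate_apply, mFourier_apply_add,
    mFourier_apply_nsmul, smul_eq_mul, Finset.sum_mul, mul_assoc]

variable {τ : UnitAddTorus d}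

theorem tendsto_birkhoffAverage_mFourier (hτ : ∀ n, mFourier n τ = 1 → n = 0) (n : d → ℤ)
    (x : UnitAddTorus d) :
    Tendsto (birkhoffAverage ℂ (τ + ·) (mFourier n) · x) atTop (𝓝 (∫ y, mFourier n y)) := by
  by_cases hn : n = 0
  · subst hn
    have hconst : ∀ᶠ K : ℕ in atTop, birkhoffAverage ℂ (τ + ·) (mFourier 0) K x = 1 := by
      filter_upwards [eventually_ne_atTop 0] with K hK
      rw [birkhoffAverage_of_comp_eq ℂ (by simp [mFourier_zero]) (Nat.cast_ne_zero.2 hK),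
        mFourier_zero, ContinuousMap.one_apply]
    simpa [mFourier_zero] using tendsto_const_nhds.congr' (EventuallyEq.symm hconst)
  · have h1 : mFourier n τ ≠ 1 := fun h => hn (hτ n h)
    rw [integral_mFourier_of_apply_ne_one h1]
    simp_rw [birkhoffAverage_add_left_mFourier]
    simpa using (tendsto_inv_mul_geom_sum_zero (norm_mFourier_apply n τ).le h1).mul_const
      (mFourier n x)

theorem tendsto_birkhoffAverage_integral (hτ : ∀ n, mFourier n τ = 1 → n = 0)
    (g : C(UnitAddTorus d, ℂ)) (x : UnitAddTorus d) :
    Tendsto (birkhoffAverage ℂ (τ + ·) g · x) atTop (𝓝 (∫ y, g y)) := by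
  set S := {g : C(UnitAddTorus d, ℂ) |
    Tendsto (birkhoffAverage ℂ (τ + ·) g · x) atTop (𝓝 (∫ y, g y))}
  have hequi : Equicontinuous fun K (g : C(UnitAddTorus d, ℂ)) => birkhoffAverage ℂ (τ + ·) g K x :=
    (LipschitzWith.uniformEquicontinuous _ 1 fun K =>
      ContinuousMap.lipschitzWith_one_birkhoffAverage _ K x).equicontinuous
  have hclosed : IsClosed S :=
    hequi.isClosed_setOfPred_tendsto (ContinuousMap.lipschitzWith_one_integral volume).continuous
  have hspan : ∀ g ∈ Submodule.span ℂ (range (mFourier (d := d))), g ∈ S := by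
    intro g hg
    induction hg using Submodule.span_induction with
    | mem g hg =>
      obtain ⟨n, rfl⟩ := hg
      exact tendsto_birkhoffAverage_mFourier hτ n x
    | zero => simp [S, birkhoffAverage, birkhoffSum]
    | add g h _ _ hg hh =>
      simpa [S, birkhoffAverage_add, integral_add (g.integrable volume) (h.integrable volume)]
        using hg.add hh
    | smul c g _ hg =>
      simpa [S, birkhoffAverage, birkhoffSum, integral_const_mul, Finset.mul_sum,
        mul_left_comm c] using hg.const_smul c
  refine hclosed.closure_subset_iff.2 hspan ?_
  rw [← Submodule.topologicalClosure_coe, span_mFourier_closure_eq_top]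
  trivial

theorem dense_range_nsmul (hτ : ∀ n, mFourier n τ = 1 → n = 0) :
    Dense (range fun k : ℕ => k • τ) := by
  refine Metric.dense_iff.2 fun y r hr => not_not.1 fun hmiss => ?_
  let bump : C(UnitAddTorus d, ℝ) := ⟨fun z => max (r - dist z y) 0, by fun_prop⟩
  have hpos : 0 < ∫ z, bump z :=
    bump.continuous.integral_pos_of_hasCompactSupport_nonneg_nonzero
      (HasCompactSupport.of_compactSpace _) (fun z => le_max_right _ _) (x := y)
      (by simpa [bump] using hr)
  have hvanish (k : ℕ) : bump (k • τ) = 0 := by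
    have : k • τ ∉ Metric.ball y r := fun hk => hmiss ⟨_, hk, k, rfl⟩
    simpa [bump, Metric.mem_ball] using this
  let bumpℂ : C(UnitAddTorus d, ℂ) := ⟨fun z => (bump z : ℂ), by fun_prop⟩
  have hlim := tendsto_birkhoffAverage_integral hτ bumpℂ 0
  have hzero (K : ℕ) : birkhoffAverage ℂ (τ + ·) bumpℂ K 0 = 0 := by
    simp [birkhoffAverage, birkhoffSum, bumpℂ, hvanish]
  have hintegral : ∫ z, bumpℂ z = ∫ z, bump z := integral_ofReal
  simp only [hzero, hintegral] at hlim
  exact hpos.ne' (Complex.ofReal_eq_zero.1 (tendsto_nhds_unique hlim tendsto_const_nhds))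

end UnitAddTorus

theorem LinearIndependent.eq_zero_of_sum_zsmul_eq_intCast {K : Type*} [Field K] [CharZero K]
    {d : ℕ} {θ : Fin d → K} (hθ : LinearIndependent ℚ (Fin.cons 1 θ : Fin (d + 1) → K))
    {n : Fin d → ℤ} {m : ℤ} (h : ∑ i, n i • θ i = m) : n = 0 := by
  have hzero := Fintype.linearIndependent_iff.1 (hθ.restrict_scalars' ℤ) (Fin.cons (-m) n)
    (by simp only [Fin.sum_univ_succ, Fin.cons_zero, Fin.cons_succ, h]; simp)
  exact funext fun i => by simpa using hzero i.succ

theorem kronecker_dense_scaled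
    {d : ℕ} (θ : Fin d → ℝ)
    (hθ : LinearIndependent ℚ (Fin.cons 1 θ : Fin (d + 1) → ℝ))
    (N : ℕ) (hN : 0 < N) :
    Dense {x : Fin d → ℝ | ∃ (m : Fin d → ℤ) (k : ℤ),
      x = fun i => ((m i : ℝ) + (k : ℝ) * θ i) / N} := by
  set τ : UnitAddTorus (Fin d) := fun i => (θ i : UnitAddCircle)
  have hτ (n : Fin d → ℤ) (hn : mFourier n τ = 1) : n = 0 := by
    obtain ⟨m, hm⟩ := (mFourier_coe_eq_one_iff n θ).1 hn
    exact hθ.eq_zero_of_sum_zsmul_eq_intCast hm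
  refine (dense_preimage_coe (dense_range_nsmul hτ)).mono ?_
  rintro x ⟨k, hk⟩
  obtain ⟨m, hm⟩ := exists_int_eq_add_of_coe_eq_coe (y := k • θ)
    (hk.symm.trans (funext fun i => by simp [τ]))
  refine ⟨fun i => N * m i, N * k, funext fun i => ?_⟩
  rw [hm i, Pi.smul_apply, nsmul_eq_mul]
  field_simp
  push_cast
  ring
end

section
/- Every exponential polynomial f : ℝ^d → ℂ solves the Popoviciu–Ionescu functional equation in d variables for all n large enough: there exists N such that for every n ≥ N and all x, h ∈ ℝ^d, the determinant of the (n+1)×(n+1) matrix whose (i,j) entry is f(x + (i+j)h), for 0 ≤ i, j ≤ n, equals zero. -/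
/-- `f : ℝ^d → ℂ` is an exponential polynomial: a finite sum of terms
`P_k(x) * exp(⟨λ_k, x⟩)` with `P_k` complex polynomials and `λ_k ∈ ℂ^d`. -/
def IsExpPoly {d : ℕ} (f : (Fin d → ℝ) → ℂ) : Prop :=
  ∃ (m : ℕ) (P : Fin m → MvPolynomial (Fin d) ℂ) (lam : Fin m → Fin d → ℂ),
    ∀ x : Fin d → ℝ,
      f x = ∑ k, MvPolynomial.eval (fun i => (x i : ℂ)) (P k) *
        Complex.exp (∑ i, lam k i * x i)

/-!
Along a line `t ↦ x + t • h`, an exponential polynomial with `m` terms of total degree at most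
`E` becomes a quasi-polynomial sequence `g t = ∑ k, Q_k(t) μ_k ^ t` with `deg Q_k ≤ E`. Taylor
expansion `Q_k(i + j) = ∑_{b ≤ E} (taylor j Q_k)_b i ^ b` splits the Hankel matrix
`(g (i + j))_{i,j}` as a product through a space of dimension `m (E + 1)`, so its determinant
vanishes as soon as its size exceeds `m (E + 1)`.
-/

open Finset Polynomial

namespace Matrix

def hankel {R : Type*} (g : ℕ → R) (n : ℕ) : Matrix (Fin n) (Fin n) R :=
  of fun i j => g (i + j)

theorem det_mul_eq_zero_of_card_lt {K m ι : Type*} [Field K] [Fintype m] [DecidableEq m]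
    [Fintype ι] (A : Matrix m ι K) (B : Matrix ι m K) (h : Fintype.card ι < Fintype.card m) :
    (A * B).det = 0 := by
  by_contra hdet
  have hrank : (A * B).rank = Fintype.card m :=
    rank_of_isUnit _ ((isUnit_iff_isUnit_det _).2 (Ne.isUnit hdet))
  have := (rank_mul_le_left A B).trans (rank_le_card_width A)
  omega

theorem hankel_quasiPolynomial_eq_mul {R ι : Type*} [CommRing R] [Fintype ι] {E : ℕ}
    (Q : ι → R[X]) (μ : ι → R) (hQ : ∀ k, (Q k).natDegree ≤ E) (n : ℕ) :
    hankel (fun t => ∑ k, (Q k).eval (t : R) * μ k ^ t) n =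
      (of fun (i : Fin n) (kb : ι × Fin (E + 1)) =>
        ((i : ℕ) : R) ^ (kb.2 : ℕ) * μ kb.1 ^ (i : ℕ)) *
      of fun (kb : ι × Fin (E + 1)) (j : Fin n) =>
        (taylor ((j : ℕ) : R) (Q kb.1)).coeff kb.2 * μ kb.1 ^ (j : ℕ) := by
  ext i j
  rw [mul_apply]
  simp only [hankel, of_apply, Fintype.sum_prod_type]
  refine sum_congr rfl fun k _ => ?_
  have hdeg : (taylor ((j : ℕ) : R) (Q k)).natDegree < E + 1 := by
    rw [natDegree_taylor]
    exact Nat.lt_succ_of_le (hQ k)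
  rw [Nat.cast_add, ← taylor_eval, eval_eq_sum_range' hdeg, ← Fin.sum_univ_eq_sum_range,
    pow_add, sum_mul]
  exact sum_congr rfl fun b _ => by ring

theorem det_hankel_quasiPolynomial_eq_zero {K ι : Type*} [Field K] [Fintype ι] {E n : ℕ}
    (Q : ι → K[X]) (μ : ι → K) (hQ : ∀ k, (Q k).natDegree ≤ E)
    (hn : Fintype.card ι * (E + 1) < n) :
    (hankel (fun t => ∑ k, (Q k).eval (t : K) * μ k ^ t) n).det = 0 := by
  rw [hankel_quasiPolynomial_eq_mul Q μ hQ]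
  exact det_mul_eq_zero_of_card_lt _ _ (by simpa using hn)

end Matrix

namespace MvPolynomial

theorem natDegree_aeval_le_totalDegree {σ R : Type*} [CommSemiring R] (P : MvPolynomial σ R)
    (u : σ → R[X]) (hu : ∀ i, (u i).natDegree ≤ 1) :
    (aeval u P).natDegree ≤ P.totalDegree := by
  rw [aeval_def, eval₂_eq]
  refine natDegree_sum_le_of_forall_le _ _ fun s hs => natDegree_mul_le.trans ?_
  rw [Polynomial.algebraMap_eq, natDegree_C, zero_add]
  refine (natDegree_prod_le _ _).trans ((sum_le_sum fun i _ => natDegree_pow_le.trans ?_).trans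
    (le_totalDegree hs))
  simpa using Nat.mul_le_mul_left (s i) (hu i)

theorem eval_aeval_linear {σ R : Type*} [CommSemiring R] (P : MvPolynomial σ R)
    (a b : σ → R) (t : R) :
    (aeval (fun i => Polynomial.C (a i) * Polynomial.X + Polynomial.C (b i)) P).eval t =
      eval (fun i => a i * t + b i) P := by
  rw [← coe_aeval_eq_eval, ← Polynomial.coe_aeval_eq_eval, comp_aeval_apply]
  simp

end MvPolynomial

theorem IsExpPoly.exists_quasiPolynomial_on_lines {d : ℕ} {f : (Fin d → ℝ) → ℂ}
    (hf : IsExpPoly f) :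
    ∃ m E : ℕ, ∀ x h : Fin d → ℝ, ∃ (Q : Fin m → ℂ[X]) (μ : Fin m → ℂ),
      (∀ k, (Q k).natDegree ≤ E) ∧
        ∀ t : ℕ, f (x + t • h) = ∑ k, (Q k).eval (t : ℂ) * μ k ^ t := by
  obtain ⟨m, P, lam, hP⟩ := hf
  set E := univ.sup fun k => (P k).totalDegree
  have hE : ∀ k, (P k).totalDegree ≤ E := fun k =>
    le_sup (f := fun k => (P k).totalDegree) (mem_univ k)
  refine ⟨m, E, fun x h => ?_⟩
  let line : Fin d → ℂ[X] := fun i => C (h i : ℂ) * X + C (x i : ℂ)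
  refine ⟨fun k => C (Complex.exp (∑ i, lam k i * x i)) * MvPolynomial.aeval line (P k),
    fun k => Complex.exp (∑ i, lam k i * h i), fun k => ?_, fun t => ?_⟩
  · calc _ ≤ (MvPolynomial.aeval line (P k)).natDegree := natDegree_C_mul_le _ _
      _ ≤ (P k).totalDegree :=
        MvPolynomial.natDegree_aeval_le_totalDegree _ _ fun _ => natDegree_linear_le
      _ ≤ E := hE k
  · have hcoord : ∀ i, (((x + t • h) i : ℝ) : ℂ) = h i * t + x i := fun i => by
      simp [mul_comm, add_comm]
    have hexponent : ∀ k, ∑ i, lam k i * (h i * t + x i) =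
        ∑ i, lam k i * x i + t * ∑ i, lam k i * h i := fun k => by
      rw [mul_sum, ← sum_add_distrib]
      exact sum_congr rfl fun i _ => by ring
    refine (hP _).trans (sum_congr rfl fun k _ => ?_)
    simp only [hcoord]
    rw [hexponent, Complex.exp_add, Complex.exp_nat_mul, eval_mul, eval_C,
      MvPolynomial.eval_aeval_linear]
    ring

theorem expPoly_solves_popoviciu_ionescu
    {d : ℕ} (f : (Fin d → ℝ) → ℂ) (hf : IsExpPoly f) :
    ∃ N : ℕ, ∀ n ≥ N, ∀ x h : Fin d → ℝ,
      Matrix.det (fun i j : Fin (n + 1) => f (x + ((i : ℕ) + (j : ℕ)) • h)) = 0 := by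
  obtain ⟨m, E, hlines⟩ := hf.exists_quasiPolynomial_on_lines
  refine ⟨m * (E + 1), fun n hn x h => ?_⟩
  obtain ⟨Q, μ, hQ, hfQ⟩ := hlines x h
  have hdet := Matrix.det_hankel_quasiPolynomial_eq_zero Q μ hQ
    (n := n + 1) (by rw [Fintype.card_fin]; omega)
  rwa [← funext hfQ] at hdet
end

section
/- (Anselone–Korevaar, continuous-function version.) Let f : ℝ^d → ℂ be a continuous function such that the complex linear span of the set of all translates {τ_h f : h ∈ ℝ^d} is finite dimensional. Then f is an exponential polynomial. -/
open NormedSpace MeasureTheory intervalIntegral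
open scoped Matrix

attribute [local instance] Matrix.linftyOpNormedRing Matrix.linftyOpNormedAlgebra

namespace AK

variable {d : ℕ}

/-- Inductive closure of exponential-polynomial atoms under addition. -/
inductive EP : ((Fin d → ℝ) → ℂ) → Prop
  | atom (P : MvPolynomial (Fin d) ℂ) (lam : Fin d → ℂ) :
      EP (fun x => MvPolynomial.eval (fun i => (x i : ℂ)) P * Complex.exp (∑ i, lam i * x i))
  | add {g h} : EP g → EP h → EP (fun x => g x + h x)

lemma EP.congr {g h : (Fin d → ℝ) → ℂ} (hg : EP g) (e : ∀ x, h x = g x) : EP h := by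
  have : h = g := funext e
  rw [this]; exact hg

lemma EP.const (c : ℂ) : EP (d := d) (fun _ => c) := by
  refine (EP.atom (MvPolynomial.C c) 0).congr fun x => ?_
  simp

lemma EP.zero : EP (d := d) (fun _ => 0) := EP.const 0

lemma EP.mul {g h : (Fin d → ℝ) → ℂ} (hg : EP g) (hh : EP h) :
    EP (fun x => g x * h x) := by
  induction hg generalizing h with
  | add hg1 hg2 ih1 ih2 =>
    exact (EP.add (ih1 hh) (ih2 hh)).congr fun x => (add_mul _ _ _)
  | atom P lam =>
    induction hh with
    | add hh1 hh2 ih1 ih2 =>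
      exact (EP.add ih1 ih2).congr fun x => (mul_add _ _ _)
    | atom Q mu =>
      refine (EP.atom (P * Q) (lam + mu)).congr fun x => ?_
      simp only [map_mul, Pi.add_apply, add_mul, Finset.sum_add_distrib, Complex.exp_add]
      ring

lemma EP.sum {ι : Type*} (s : Finset ι) (g : ι → (Fin d → ℝ) → ℂ)
    (h : ∀ j ∈ s, EP (g j)) : EP (fun x => ∑ j ∈ s, g j x) := by
  classical
  induction s using Finset.induction with
  | empty => exact EP.zero.congr fun x => by simp
  | insert a s hnot ih =>
    refine (EP.add (h a (s.mem_insert_self a)) (ih fun j hj => h j (Finset.mem_insert_of_mem hj))).congr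
      fun x => ?_
    rw [Finset.sum_insert hnot]

lemma EP.smul {g : (Fin d → ℝ) → ℂ} (c : ℂ) (hg : EP g) : EP (fun x => c * g x) :=
  (EP.const c).mul hg

lemma isExpPoly_of_EP {g : (Fin d → ℝ) → ℂ} (hg : EP g) : IsExpPoly g := by
  induction hg with
  | atom P lam =>
    exact ⟨1, fun _ => P, fun _ => lam, fun x => by simp⟩
  | add hg1 hg2 ih1 ih2 =>
    obtain ⟨m, P, lam, hP⟩ := ih1
    obtain ⟨m', Q, mu, hQ⟩ := ih2
    refine ⟨m + m', Fin.addCases P Q, Fin.addCases lam mu, fun x => ?_⟩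
    rw [Fin.sum_univ_add]
    simp only [Fin.addCases_left, Fin.addCases_right]
    rw [hP x, hQ x]





variable {n : ℕ}

lemma nil_exp (A : Matrix (Fin n) (Fin n) ℂ) (μ : ℂ) (w : Fin n → ℂ) (K : ℕ)
    (hw : ((A - μ • 1) ^ K) *ᵥ w = 0) (t : ℂ) :
    exp (t • A) *ᵥ w =
      Complex.exp (t * μ) • ∑ l ∈ Finset.range K,
        (t ^ l * (Nat.factorial l : ℂ)⁻¹) • (((A - μ • 1) ^ l) *ᵥ w) := by
  classical
  set N : Matrix (Fin n) (Fin n) ℂ := A - μ • 1 with hN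
  have hsplit : t • A = (t * μ) • (1 : Matrix (Fin n) (Fin n) ℂ) + t • N := by
    rw [hN]; module
  have hcomm : Commute ((t * μ) • (1 : Matrix (Fin n) (Fin n) ℂ)) (t • N) :=
    ((Commute.one_left (t • N)).smul_left (t * μ))
  have h1 : exp ((t * μ) • (1 : Matrix (Fin n) (Fin n) ℂ))
      = Complex.exp (t * μ) • (1 : Matrix (Fin n) (Fin n) ℂ) := by
    have ha : ((t * μ) • (1 : Matrix (Fin n) (Fin n) ℂ))
        = algebraMap ℂ (Matrix (Fin n) (Fin n) ℂ) (t * μ) :=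
      (Algebra.algebraMap_eq_smul_one _).symm
    rw [ha, ← Algebra.algebraMap_eq_smul_one, Complex.exp_eq_exp_ℂ]
    exact (map_exp (algebraMap ℂ (Matrix (Fin n) (Fin n) ℂ)) (continuous_algebraMap _ _) _).symm
  -- the linear map B ↦ B *ᵥ w
  let Lw : Matrix (Fin n) (Fin n) ℂ →ₗ[ℂ] (Fin n → ℂ) :=
    { toFun := fun B => B *ᵥ w
      map_add' := fun B C => Matrix.add_mulVec B C w
      map_smul' := fun c B => Matrix.smul_mulVec c B w }
  have hLw : Continuous Lw := Lw.continuous_of_finiteDimensional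
  have hhs : HasSum (fun l : ℕ => ((Nat.factorial l : ℂ)⁻¹ • (t • N) ^ l) *ᵥ w)
      (exp (t • N) *ᵥ w) :=
    (exp_series_hasSum_exp' (𝕂 := ℂ) (t • N)).map Lw.toAddMonoidHom hLw
  have hzero : ∀ l ∉ Finset.range K,
      ((Nat.factorial l : ℂ)⁻¹ • (t • N) ^ l) *ᵥ w = 0 := by
    intro l hl
    rw [Finset.mem_range, not_lt] at hl
    have : N ^ l = N ^ (l - K) * N ^ K := by
      rw [← pow_add]; congr 1; omega
    rw [smul_pow, smul_smul, Matrix.smul_mulVec, this,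
      ← Matrix.mulVec_mulVec, hw, Matrix.mulVec_zero, smul_zero]
  have hexpN : exp (t • N) *ᵥ w
      = ∑ l ∈ Finset.range K, ((Nat.factorial l : ℂ)⁻¹ • (t • N) ^ l) *ᵥ w := by
    rw [← hhs.tsum_eq]
    exact tsum_eq_sum hzero
  rw [hsplit, Matrix.exp_add_of_commute _ _ hcomm, h1, smul_mul_assoc, one_mul,
    Matrix.smul_mulVec, hexpN]
  congr 1
  refine Finset.sum_congr rfl fun l _ => ?_
  rw [smul_pow, smul_smul, Matrix.smul_mulVec,
    mul_comm ((Nat.factorial l : ℂ)⁻¹) (t ^ l)]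


lemma exp_entry (A : Matrix (Fin n) (Fin n) ℂ) (j k : Fin n) :
    ∃ (s : Finset ℂ) (p : ℂ → Polynomial ℂ), ∀ t : ℂ,
      exp (t • A) j k = ∑ μ ∈ s, Polynomial.eval t (p μ) * Complex.exp (t * μ) := by
  classical
  set T : Module.End ℂ (Fin n → ℂ) := Matrix.toLinAlgEquiv' A with hT
  have htop : ⨆ μ : ℂ, T.maxGenEigenspace μ = ⊤ :=
    Module.End.iSup_maxGenEigenspace_eq_top T
  have hv : (Pi.single k 1 : Fin n → ℂ) ∈ ⨆ μ : ℂ, T.maxGenEigenspace μ := by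
    rw [htop]; exact Submodule.mem_top
  obtain ⟨c, hc, hsum⟩ := (Submodule.mem_iSup_iff_exists_finsupp _ _).mp hv
  choose K hK using fun μ => (Module.End.mem_maxGenEigenspace T μ (c μ)).mp (hc μ)
  have hmat : ∀ μ, ((A - μ • 1) ^ (K μ)) *ᵥ (c μ) = 0 := by
    intro μ
    have h1 : ((T - μ • 1) ^ K μ) (c μ) = 0 := hK μ
    have h2 : (T - μ • 1) ^ K μ
        = Matrix.toLinAlgEquiv' ((A - μ • (1 : Matrix (Fin n) (Fin n) ℂ)) ^ (K μ)) := by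
      rw [map_pow, map_sub, _root_.map_smul, map_one, hT]
    rw [h2, Matrix.toLinAlgEquiv'_apply] at h1
    exact h1
  refine ⟨c.support,
    fun μ => ∑ l ∈ Finset.range (K μ),
      Polynomial.C ((Nat.factorial l : ℂ)⁻¹ * (((A - μ • 1) ^ l) *ᵥ (c μ)) j)
        * Polynomial.X ^ l,
    fun t => ?_⟩
  have hcol : exp (t • A) j k = (exp (t • A) *ᵥ (Pi.single k 1 : Fin n → ℂ)) j := by
    rw [Matrix.mulVec_single]; simp
  rw [hcol, ← hsum]
  have hlin : exp (t • A) *ᵥ (c.sum fun _ v => v)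
      = ∑ μ ∈ c.support, exp (t • A) *ᵥ (c μ) := by
    rw [Finsupp.sum]
    exact map_sum (Matrix.mulVecLin (exp (t • A))) _ _
  rw [hlin]
  rw [Finset.sum_apply]
  refine Finset.sum_congr rfl fun μ _ => ?_
  rw [nil_exp A μ (c μ) (K μ) (hmat μ) t]
  simp only [Pi.smul_apply, Finset.sum_apply, smul_eq_mul, Polynomial.eval_finset_sum,
    Polynomial.eval_mul, Polynomial.eval_C, Polynomial.eval_pow, Polynomial.eval_X,
    Finset.mul_sum, Finset.sum_mul]
  refine Finset.sum_congr rfl fun l _ => ?_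
  ring





variable {n : ℕ}

noncomputable instance matENormedAddMonoid {n : ℕ} : ENormedAddMonoid (Matrix (Fin n) (Fin n) ℂ) :=
  NormedAddGroup.toENormedAddMonoid

lemma oneParam (M : ℝ → Matrix (Fin n) (Fin n) ℂ) (hM : Continuous M) (h0 : M 0 = 1)
    (hadd : ∀ s t : ℝ, M (s + t) = M s * M t) :
    ∃ A : Matrix (Fin n) (Fin n) ℂ, ∀ t : ℝ, M t = exp ((t : ℂ) • A) := by
  classical
  -- find δ with the averaged operator invertible
  have hsmall : ∀ᶠ s in nhds (0 : ℝ), ‖M s - 1‖ ≤ 1 / 2 := by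
    have ht : Filter.Tendsto (fun s => ‖M s - 1‖) (nhds 0) (nhds ‖M 0 - 1‖) :=
      ((hM.sub continuous_const).norm).tendsto 0
    rw [h0, sub_self, norm_zero] at ht
    exact ht.eventually (eventually_le_nhds (by norm_num))
  obtain ⟨ε, hε0, hε⟩ := Metric.eventually_nhds_iff.mp hsmall
  set δ : ℝ := ε / 2 with hδdef
  have hδ0 : 0 < δ := by positivity
  have hδ : ∀ s : ℝ, |s| ≤ δ → ‖M s - 1‖ ≤ 1 / 2 := by
    intro s hs
    apply hε
    rw [Real.dist_eq, sub_zero]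
    calc |s| ≤ δ := hs
      _ < ε := by rw [hδdef]; linarith
  have hint : ∀ a b : ℝ, IntervalIntegrable M volume a b := fun a b =>
    hM.intervalIntegrable a b
  set S : Matrix (Fin n) (Fin n) ℂ := ∫ s in (0:ℝ)..δ, M s with hSdef
  -- S is a unit
  have hSsub : ‖S - δ • (1 : Matrix (Fin n) (Fin n) ℂ)‖ ≤ 1 / 2 * |δ - 0| := by
    have h1 : S - δ • (1 : Matrix (Fin n) (Fin n) ℂ) = ∫ s in (0:ℝ)..δ, (M s - 1) := by
      rw [integral_sub (hint 0 δ) (intervalIntegrable_const), intervalIntegral.integral_const, sub_zero]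
    rw [h1]
    refine intervalIntegral.norm_integral_le_of_norm_le_const fun s hs => ?_
    apply hδ
    rw [Set.uIoc_of_le hδ0.le] at hs
    rw [abs_le]
    constructor <;> [linarith [hs.1]; linarith [hs.2]]
  have hunit : IsUnit S := by
    have h2 : ‖(1 : Matrix (Fin n) (Fin n) ℂ) - δ⁻¹ • S‖ < 1 := by
      have h3 : (1 : Matrix (Fin n) (Fin n) ℂ) - δ⁻¹ • S
          = δ⁻¹ • (δ • (1 : Matrix (Fin n) (Fin n) ℂ) - S) := by
        rw [smul_sub, smul_smul, inv_mul_cancel₀ hδ0.ne', one_smul]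
      rw [h3, norm_smul, ← norm_neg (δ • (1 : Matrix (Fin n) (Fin n) ℂ) - S), neg_sub]
      have : ‖δ⁻¹‖ = δ⁻¹ := by
        rw [Real.norm_eq_abs, abs_of_pos (by positivity)]
      rw [this]
      calc δ⁻¹ * ‖S - δ • (1 : Matrix (Fin n) (Fin n) ℂ)‖
          ≤ δ⁻¹ * (1 / 2 * |δ - 0|) := by
            apply mul_le_mul_of_nonneg_left hSsub (by positivity)
        _ = 1 / 2 := by
            rw [sub_zero, abs_of_pos hδ0]
            field_simp
        _ < 1 := by norm_num
    have h4 : IsUnit (δ⁻¹ • S) := by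
      have h6 := isUnit_one_sub_of_norm_lt_one h2
      rwa [sub_sub_cancel] at h6
    have h5 : S = δ • (δ⁻¹ • S) := by
      rw [smul_smul, mul_inv_cancel₀ hδ0.ne', one_smul]
    rw [h5, Algebra.smul_def]
    exact ((isUnit_iff_ne_zero.mpr (by exact_mod_cast hδ0.ne' : (δ:ℝ) ≠ 0)).map
      (algebraMap ℝ (Matrix (Fin n) (Fin n) ℂ))).mul h4
  obtain ⟨u, hu⟩ := hunit
  -- M t * S as a sliding integral
  have hMS : ∀ t : ℝ, M t * S = ∫ s in t..(t + δ), M s := by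
    intro t
    calc M t * S = (ContinuousLinearMap.mul ℂ (Matrix (Fin n) (Fin n) ℂ) (M t))
          (∫ s in (0:ℝ)..δ, M s) := rfl
      _ = ∫ s in (0:ℝ)..δ, M t * M s :=
          ((ContinuousLinearMap.mul ℂ (Matrix (Fin n) (Fin n) ℂ) (M t)).intervalIntegral_comp_comm
            (hint 0 δ)).symm
      _ = ∫ s in (0:ℝ)..δ, M (t + s) := by
          refine intervalIntegral.integral_congr fun s _ => ?_
          rw [hadd]
      _ = ∫ s in (t + 0)..(t + δ), M s := intervalIntegral.integral_comp_add_left M t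
      _ = ∫ s in t..(t + δ), M s := by rw [add_zero]
  -- derivative of the sliding integral
  set I : ℝ → Matrix (Fin n) (Fin n) ℂ := fun v => ∫ s in (0:ℝ)..v, M s with hIdef
  have hI : ∀ b : ℝ, HasDerivAt I (M b) b := fun b =>
    (hM.integral_hasStrictDerivAt 0 b).hasDerivAt
  have hMS' : ∀ t : ℝ, M t * S = I (t + δ) - I t := by
    intro t
    rw [hMS t]
    have := intervalIntegral.integral_add_adjacent_intervals (hint 0 t) (hint t (t + δ))
    rw [hIdef]
    simp only []
    rw [← this]
    abel
  have hDerivMS : ∀ t : ℝ, HasDerivAt (fun t => M t * S) (M t * (M δ - 1)) t := by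
    intro t
    have hshift : HasDerivAt (fun t : ℝ => I (t + δ)) (M (t + δ)) t := by
      exact HasDerivAt.comp_add_const t δ (hI (t + δ))
    have h8 : HasDerivAt (fun t : ℝ => I (t + δ) - I t) (M (t + δ) - M t) t :=
      hshift.sub (hI t)
    have h9 : (fun t : ℝ => I (t + δ) - I t) = fun t => M t * S := by
      funext t; rw [hMS' t]
    rw [h9] at h8
    have h10 : M (t + δ) - M t = M t * (M δ - 1) := by
      rw [hadd t δ, mul_sub, mul_one]
    rwa [h10] at h8
  -- M is differentiable with M' = M * A
  set A : Matrix (Fin n) (Fin n) ℂ := (M δ - 1) * (↑(u⁻¹) : Matrix (Fin n) (Fin n) ℂ) with hAdef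
  have hDeriv : ∀ t : ℝ, HasDerivAt M (M t * A) t := by
    intro t
    have h11 := (hDerivMS t).mul_const (↑u⁻¹ : Matrix (Fin n) (Fin n) ℂ)
    have h12 : (fun t => M t * S * (↑u⁻¹ : Matrix (Fin n) (Fin n) ℂ)) = M := by
      funext t
      rw [← hu, mul_assoc, Units.mul_inv, mul_one]
    rw [h12] at h11
    rw [mul_assoc] at h11
    exact h11
  -- uniqueness: M t = exp (t A)
  refine ⟨A, fun t => ?_⟩
  have hE : ∀ (B : Matrix (Fin n) (Fin n) ℂ) (t : ℝ),
      HasDerivAt (fun s : ℝ => exp ((s : ℂ) • B)) (exp ((t : ℂ) • B) * B) t := by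
    intro B t
    have h15 := HasDerivAt.scomp t (hasDerivAt_exp_smul_const (𝕂 := ℂ) B (t : ℂ))
      Complex.ofRealCLM.hasDerivAt
    simp only [Complex.ofRealCLM_apply, Complex.ofReal_one, one_smul] at h15
    exact h15
  set G : ℝ → Matrix (Fin n) (Fin n) ℂ := fun t => M t * exp ((t : ℂ) • (-A)) with hGdef
  have hGderiv : ∀ t : ℝ, HasDerivAt G 0 t := by
    intro t
    have h13 := (hDeriv t).mul (hE (-A) t)
    have h14 : M t * A * exp ((t : ℂ) • (-A)) + M t * (exp ((t : ℂ) • (-A)) * (-A)) = 0 := by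
      have hcomm : A * exp ((t : ℂ) • (-A)) = exp ((t : ℂ) • (-A)) * A :=
        ((((Commute.refl A).neg_right).smul_right ((t : ℂ))).exp_right).eq
      rw [mul_assoc, hcomm, mul_neg, mul_neg, add_neg_cancel]
    rwa [h14] at h13
  have hGconst : G t = G 0 :=
    is_const_of_deriv_eq_zero (fun s => (hGderiv s).differentiableAt)
      (fun s => (hGderiv s).deriv) t 0
  have hG0 : G 0 = 1 := by
    rw [hGdef]
    simp only [Complex.ofReal_zero, zero_smul, exp_zero, h0, one_mul]
  have hprod : exp ((t : ℂ) • (-A)) * exp ((t : ℂ) • A) = 1 := by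
    rw [← Matrix.exp_add_of_commute _ _ ((((Commute.refl A).neg_left).smul_left ((t : ℂ))).smul_right ((t : ℂ)))]
    rw [← smul_add, neg_add_cancel, smul_zero, exp_zero]
  calc M t = M t * (exp ((t : ℂ) • (-A)) * exp ((t : ℂ) • A)) := by rw [hprod, mul_one]
    _ = G t * exp ((t : ℂ) • A) := by rw [hGdef, mul_assoc]
    _ = exp ((t : ℂ) • A) := by rw [hGconst, hG0, one_mul]


lemma EP.single_var {d : ℕ} (i : Fin d) (q : Polynomial ℂ) (μ : ℂ) :
    EP (fun x : Fin d → ℝ =>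
      Polynomial.eval ((x i : ℂ)) q * Complex.exp ((x i : ℂ) * μ)) := by
  refine (EP.atom (Polynomial.aeval (MvPolynomial.X i) q) (Pi.single i μ)).congr fun x => ?_
  have h1 : MvPolynomial.eval (fun i' => ((x i' : ℝ) : ℂ)) (Polynomial.aeval (MvPolynomial.X i) q)
      = Polynomial.eval ((x i : ℂ)) q := by
    induction q using Polynomial.induction_on' with
    | add p q hp hq => simp [hp, hq]
    | monomial m a => simp [Polynomial.aeval_monomial, Polynomial.eval_monomial]
  have h2 : (∑ i', (Pi.single i μ : Fin d → ℂ) i' * (x i' : ℂ)) = (x i : ℂ) * μ := by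
    rw [Finset.sum_eq_single i]
    · rw [Pi.single_eq_same, mul_comm]
    · intro b _ hb
      rw [Pi.single_eq_of_ne hb, zero_mul]
    · intro hi
      exact absurd (Finset.mem_univ i) hi
  rw [h1, h2]

lemma EP.matrix_prod {d n : ℕ} (L : List ((Fin d → ℝ) → Matrix (Fin n) (Fin n) ℂ))
    (hF : ∀ F ∈ L, ∀ j k : Fin n, EP fun x => F x j k) :
    ∀ j k : Fin n, EP fun x => (L.map (fun F => F x)).prod j k := by
  classical
  induction L with
  | nil =>
    intro j k
    refine (EP.const ((1 : Matrix (Fin n) (Fin n) ℂ) j k)).congr fun x => ?_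
    rw [List.map_nil, List.prod_nil]
  | cons F L ih =>
    intro j k
    refine (EP.sum Finset.univ
      (fun l => fun x => F x j l * (L.map (fun F => F x)).prod l k)
      (fun l _ => (hF F List.mem_cons_self j l).mul
        (ih (fun G hG => hF G (List.mem_cons_of_mem F hG)) l k))).congr fun x => ?_
    rw [List.map_cons, List.prod_cons, Matrix.mul_apply]

end AK

theorem anselone_korevaar_continuous
    {d : ℕ} (f : (Fin d → ℝ) → ℂ) (hf : Continuous f)
    (hfin : FiniteDimensional ℂ
      (Submodule.span ℂ (Set.range fun h : Fin d → ℝ => fun x => f (x + h)))) :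
    IsExpPoly f := by
  classical
  open AK in
  set V := Submodule.span ℂ (Set.range fun h : Fin d → ℝ => fun x => f (x + h)) with hV
  -- translation operators
  let tau : (Fin d → ℝ) → ((Fin d → ℝ) → ℂ) →ₗ[ℂ] ((Fin d → ℝ) → ℂ) := fun h =>
    { toFun := fun g x => g (x + h)
      map_add' := fun _ _ => rfl
      map_smul' := fun _ _ => rfl }
  have hmap : ∀ h : Fin d → ℝ, Submodule.map (tau h) V ≤ V := by
    intro h
    rw [hV, Submodule.map_span]
    refine Submodule.span_le.mpr ?_
    rintro - ⟨-, ⟨h', rfl⟩, rfl⟩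
    refine Submodule.subset_span ⟨h + h', ?_⟩
    funext x
    show f (x + (h + h')) = f (x + h + h')
    rw [add_assoc]
  let T : (Fin d → ℝ) → (V →ₗ[ℂ] V) := fun h =>
    (tau h).restrict (p := V) (q := V) (fun g hg => hmap h (Submodule.mem_map_of_mem hg))
  -- elements of V are continuous
  have hVc : ∀ g ∈ V, Continuous g := by
    intro g hg
    rw [hV] at hg
    induction hg using Submodule.span_induction with
    | mem y hy =>
      obtain ⟨h, rfl⟩ := hy
      exact hf.comp (continuous_id.add continuous_const)
    | zero => exact continuous_const
    | add a b _ _ ha hb => exact ha.add hb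
    | smul c a _ h => exact (continuous_const (y := c)).smul h
  haveI : FiniteDimensional ℂ V := hfin
  set n := Module.finrank ℂ V with hn
  let b : Module.Basis (Fin n) ℂ V := Module.finBasis ℂ V
  let Mm : (Fin d → ℝ) → Matrix (Fin n) (Fin n) ℂ := fun h => LinearMap.toMatrix b b (T h)
  -- homomorphism properties
  have hT0 : T 0 = LinearMap.id := by
    apply LinearMap.ext; intro v; apply Subtype.ext; funext x
    show (v : (Fin d → ℝ) → ℂ) (x + 0) = (v : (Fin d → ℝ) → ℂ) x
    rw [add_zero]
  have hTadd : ∀ h h' : Fin d → ℝ, T (h + h') = (T h).comp (T h') := by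
    intro h h'
    apply LinearMap.ext; intro v; apply Subtype.ext; funext x
    show (v : (Fin d → ℝ) → ℂ) (x + (h + h')) = (v : (Fin d → ℝ) → ℂ) (x + h + h')
    rw [add_assoc]
  have hM0 : Mm 0 = 1 := by
    show LinearMap.toMatrix b b (T 0) = 1
    rw [hT0, LinearMap.toMatrix_id]
  have hMadd : ∀ h h' : Fin d → ℝ, Mm (h + h') = Mm h * Mm h' := by
    intro h h'
    show LinearMap.toMatrix b b (T (h + h')) = _
    rw [hTadd, LinearMap.toMatrix_comp b b b]
  -- continuity of Mm
  have hMc : Continuous Mm := by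
    apply continuous_matrix
    intro j k
    have hc1 : Continuous fun h : Fin d → ℝ => (T h (b k) : V) := by
      refine continuous_induced_rng.2 ?_
      refine continuous_pi fun y => ?_
      exact (hVc _ (b k).2).comp (continuous_const.add continuous_id)
    let φ : V →ₗ[ℂ] ℂ := (Finsupp.lapply j) ∘ₗ (b.repr : V ≃ₗ[ℂ] (Fin n →₀ ℂ)).toLinearMap
    have hφ : Continuous φ := φ.continuous_of_finiteDimensional
    have : (fun h : Fin d → ℝ => Mm h j k) = fun h => φ (T h (b k)) := by
      funext h
      show LinearMap.toMatrix b b (T h) j k = _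
      rw [LinearMap.toMatrix_apply]
      rfl
    rw [this]
    exact hφ.comp hc1
  -- f as a matrix coefficient
  have hfV : f ∈ V := by
    rw [hV]
    refine Submodule.subset_span ⟨0, ?_⟩
    funext x
    show f (x + 0) = f x
    rw [add_zero]
  let vf : V := ⟨f, hfV⟩
  let ev0 : V →ₗ[ℂ] ℂ :=
    { toFun := fun v => (v : (Fin d → ℝ) → ℂ) 0
      map_add' := fun _ _ => rfl
      map_smul' := fun _ _ => rfl }
  have hfx : ∀ x : Fin d → ℝ, f x = ∑ j, b.repr (T x vf) j * ev0 (b j) := by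
    intro x
    have h1 : ev0 (T x vf) = ∑ j, b.repr (T x vf) j * ev0 (b j) := by
      conv_lhs => rw [← b.sum_repr (T x vf)]
      rw [map_sum]
      refine Finset.sum_congr rfl fun j _ => ?_
      rw [_root_.map_smul, smul_eq_mul]
    have h2 : ev0 (T x vf) = f x := by
      show f (0 + x) = f x
      rw [zero_add]
    rw [← h2, h1]
  have h3 : ∀ (x : Fin d → ℝ) (j : Fin n),
      b.repr (T x vf) j = ∑ k, Mm x j k * b.repr vf k := by
    intro x j
    have := congrFun (LinearMap.toMatrix_mulVec_repr b b (T x) vf) j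
    rw [← this]
    rfl
  -- decomposition of x into coordinates
  have hxdec : ∀ x : Fin d → ℝ, ∑ i, Pi.single i (x i) = x := by
    intro x; funext j
    rw [Finset.sum_apply]
    simp [Pi.single_apply]
  have hgen : ∀ l : List (Fin d → ℝ), Mm l.sum = (l.map Mm).prod := by
    intro l
    induction l with
    | nil => simpa using hM0
    | cons a l ih => rw [List.sum_cons, List.map_cons, List.prod_cons, hMadd, ih]
  have hprod : ∀ x : Fin d → ℝ,
      Mm x = (List.ofFn (fun i : Fin d => Mm (Pi.single i (x i)))).prod := by
    intro x
    have h5 : (List.ofFn (fun i : Fin d => Pi.single i (x i) : Fin d → Fin d → ℝ)).sum = x := by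
      rw [List.sum_ofFn]
      exact hxdec x
    conv_lhs => rw [← h5]
    rw [hgen, List.map_ofFn]
    rfl
  -- one-parameter groups
  have hone : ∀ i : Fin d, ∃ A : Matrix (Fin n) (Fin n) ℂ,
      ∀ t : ℝ, Mm (Pi.single i t) = NormedSpace.exp ((t : ℂ) • A) := by
    intro i
    apply AK.oneParam
    · refine hMc.comp ?_
      refine continuous_pi fun j => ?_
      rcases eq_or_ne j i with rfl | hj
      · simpa [Pi.single_apply] using continuous_id'
      · simpa [Pi.single_apply, if_neg hj] using continuous_const
    · rw [Pi.single_zero]; exact hM0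
    · intro s t; rw [← hMadd, ← Pi.single_add]
  choose A hA using hone
  -- entries of Mm (Pi.single i (x i)) are exponential polynomials
  have hEPentry : ∀ (i : Fin d) (j k : Fin n),
      AK.EP fun x : Fin d → ℝ => Mm (Pi.single i (x i)) j k := by
    intro i j k
    obtain ⟨s, p, hp⟩ := AK.exp_entry (A i) j k
    refine (AK.EP.sum s (fun μ => fun x : Fin d → ℝ =>
        Polynomial.eval ((x i : ℂ)) (p μ) * Complex.exp ((x i : ℂ) * μ))
        (fun μ _ => AK.EP.single_var i (p μ) μ)).congr fun x => ?_
    rw [hA i (x i), hp ((x i : ℂ))]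
  have hEPMm : ∀ j k : Fin n, AK.EP fun x : Fin d → ℝ => Mm x j k := by
    intro j k
    have h6 := AK.EP.matrix_prod
      (List.ofFn (fun i : Fin d => fun x : Fin d → ℝ => Mm (Pi.single i (x i))))
      (by
        intro F hF j' k'
        rw [List.mem_ofFn] at hF
        obtain ⟨i, rfl⟩ := hF
        exact hEPentry i j' k') j k
    refine h6.congr fun x => ?_
    rw [hprod x]
    simp only [List.map_ofFn]
    rfl
  -- conclusion
  refine AK.isExpPoly_of_EP ?_
  refine (AK.EP.sum Finset.univ (fun j => fun x : Fin d → ℝ =>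
      (∑ k, Mm x j k * b.repr vf k) * ev0 (b j)) (fun j _ => ?_)).congr fun x => ?_
  · exact (AK.EP.sum Finset.univ _ (fun k _ => (hEPMm j k).mul (AK.EP.const _))).mul
      (AK.EP.const _)
  · rw [hfx x]
    refine Finset.sum_congr rfl fun j _ => ?_
    rw [h3 x j]
end

section
/- Let f : ℝ^d → ℂ be any function and let h_1, ..., h_s ∈ ℝ^d. Suppose that for each i ∈ {1,...,s} there is a natural number n_i ≥ 1 such that the complex linear span of f, τ_{h_i}f, ..., (τ_{h_i})^{n_i}f has dimension at most n_i. Then for every (m_1, ..., m_s) ∈ ℤ^s, the translate τ_{m_1 h_1 + ... + m_s h_s} f lies in the finite-dimensional space W spanned by the functions (τ_{h_1})^{a_1}(τ_{h_2})^{a_2}···(τ_{h_s})^{a_s} f with 0 ≤ a_i < n_i for i = 1,...,s; in particular, the span of {τ_g f : g ∈ h_1ℤ + ... + h_sℤ} has dimension at most n_1 n_2 ··· n_s. -/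
open Submodule

noncomputable def Tsl {d : ℕ} (g : Fin d → ℝ) : ((Fin d → ℝ) → ℂ) →ₗ[ℂ] ((Fin d → ℝ) → ℂ) where
  toFun φ := fun x => φ (x + g)
  map_add' _ _ := rfl
  map_smul' _ _ := rfl

lemma Tsl_apply {d : ℕ} (g : Fin d → ℝ) (φ : (Fin d → ℝ) → ℂ) (x : Fin d → ℝ) :
    Tsl g φ x = φ (x + g) := rfl

lemma key_one {d : ℕ} (f : (Fin d → ℝ) → ℂ) (h : Fin d → ℝ) (n : ℕ)
    (hspan : Module.finrank ℂ (Submodule.span ℂ (Set.range fun k : Fin (n+1) =>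
       fun x : Fin d → ℝ => f (x + (k:ℕ) • h))) ≤ n) :
    ∀ m : ℤ, (fun x => f (x + m • h)) ∈
      Submodule.span ℂ (Set.range fun k : Fin n => fun x : Fin d → ℝ => f (x + (k:ℕ) • h)) := by
  classical
  set v : ℤ → (Fin d → ℝ) → ℂ := fun m => fun x => f (x + m • h) with hv
  have hvnat : ∀ k : ℕ, (fun x : Fin d → ℝ => f (x + k • h)) = v k := by
    intro k; funext x; simp [hv, natCast_zsmul]
  have hTv : ∀ c m : ℤ, Tsl (c • h) (v m) = v (m + c) := by
    intro c m; funext x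
    simp only [Tsl_apply, hv, add_smul]
    ring_nf
  set V : Submodule ℂ ((Fin d → ℝ) → ℂ) :=
    Submodule.span ℂ (Set.range fun k : Fin n => v (k:ℕ)) with hV
  have hVeq : Submodule.span ℂ (Set.range fun k : Fin n =>
      fun x : Fin d → ℝ => f (x + (k:ℕ) • h)) = V := by
    rw [hV]; congr 1
  rw [hVeq]
  -- linear dependence
  have hdep : ¬ LinearIndependent ℂ (fun k : Fin (n+1) => v (k:ℕ)) := by
    intro hli
    have h1 := finrank_span_eq_card hli
    rw [Fintype.card_fin] at h1
    have hle : Module.finrank ℂ (Submodule.span ℂ (Set.range fun k : Fin (n+1) => v (k:ℕ))) ≤ n := by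
      have e : Submodule.span ℂ (Set.range fun k : Fin (n+1) => v (k:ℕ)) = Submodule.span ℂ (Set.range fun k : Fin (n+1) => fun x : Fin d → ℝ => f (x + (k:ℕ) • h)) := by
        congr 1
      rw [e]; exact hspan
    omega
  obtain ⟨c, hcsum, i0, hi0⟩ := Fintype.not_linearIndependent_iff.1 hdep
  set F : Finset (Fin (n+1)) := Finset.univ.filter (fun k => c k ≠ 0) with hF
  have hFne : F.Nonempty := ⟨i0, by simp [hF, hi0]⟩
  set j : Fin (n+1) := F.max' hFne with hj
  set j0 : Fin (n+1) := F.min' hFne with hj0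
  have hjF : j ∈ F := F.max'_mem hFne
  have hj0F : j0 ∈ F := F.min'_mem hFne
  have hcj : c j ≠ 0 := by rw [hF] at hjF; exact (Finset.mem_filter.1 hjF).2
  have hcj0 : c j0 ≠ 0 := by rw [hF] at hj0F; exact (Finset.mem_filter.1 hj0F).2
  have hsumF : ∑ k ∈ F, c k • v (k:ℕ) = 0 := by
    rw [← hcsum]
    apply Finset.sum_subset F.subset_univ
    intro k _ hk
    rw [hF, Finset.mem_filter] at hk
    simp only [Finset.mem_univ, true_and, not_not] at hk
    rw [hk, zero_smul]
  -- relation at the top index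
  have hmemA : v (j:ℕ) ∈ Submodule.span ℂ (v '' {z : ℤ | 0 ≤ z ∧ z < (j:ℕ)}) := by
    have hadd := Finset.add_sum_erase F (fun k => c k • v (k:ℕ)) hjF
    rw [hsumF] at hadd
    have hrw : v (j:ℕ) = (c j)⁻¹ • (- ∑ k ∈ F.erase j, c k • v (k:ℕ)) := by
      rw [← eq_neg_of_add_eq_zero_left hadd, inv_smul_smul₀ hcj]
    rw [hrw]
    refine Submodule.smul_mem _ _ (Submodule.neg_mem _ (Submodule.sum_mem _ ?_))
    intro k hk
    have hkF := Finset.mem_of_mem_erase hk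
    have hkj : (k:ℕ) < (j:ℕ) :=
      lt_of_le_of_ne (F.le_max' k hkF) (fun he => Finset.ne_of_mem_erase hk (Fin.ext he))
    exact Submodule.smul_mem _ _ (Submodule.subset_span
      ⟨((k:ℕ):ℤ), ⟨Int.natCast_nonneg _, by exact_mod_cast hkj⟩, rfl⟩)
  -- relation at the bottom index
  have hmemB : v (j0:ℕ) ∈ Submodule.span ℂ (v '' {z : ℤ | (j0:ℕ) < z ∧ z ≤ (j:ℕ)}) := by
    have hadd := Finset.add_sum_erase F (fun k => c k • v (k:ℕ)) hj0F
    rw [hsumF] at hadd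
    have hrw : v (j0:ℕ) = (c j0)⁻¹ • (- ∑ k ∈ F.erase j0, c k • v (k:ℕ)) := by
      rw [← eq_neg_of_add_eq_zero_left hadd, inv_smul_smul₀ hcj0]
    rw [hrw]
    refine Submodule.smul_mem _ _ (Submodule.neg_mem _ (Submodule.sum_mem _ ?_))
    intro k hk
    have hkF := Finset.mem_of_mem_erase hk
    have hkj0 : (j0:ℕ) < (k:ℕ) :=
      lt_of_le_of_ne (F.min'_le k hkF) (fun he => Finset.ne_of_mem_erase hk (Fin.ext he.symm))
    exact Submodule.smul_mem _ _ (Submodule.subset_span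
      ⟨((k:ℕ):ℤ), ⟨by exact_mod_cast hkj0, by exact_mod_cast F.le_max' k hkF⟩, rfl⟩)
  have hjn : (j:ℕ) ≤ n := Nat.lt_succ_iff.1 j.isLt
  -- all nonnegative translates lie in V
  have hup : ∀ t : ℕ, v (t:ℤ) ∈ V := by
    intro t
    induction t using Nat.strong_induction_on with
    | _ t IH =>
      rcases lt_or_ge t (j:ℕ) with hlt | hge
      · rw [hV]
        exact Submodule.subset_span ⟨⟨t, by omega⟩, rfl⟩
      · have heq : v (t:ℤ) = Tsl (((t:ℤ) - ((j:ℕ):ℤ)) • h) (v ((j:ℕ):ℤ)) := by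
          rw [hTv]; congr 1; ring
        rw [heq]
        have hmap := Submodule.mem_map_of_mem (f := Tsl (((t:ℤ) - ((j:ℕ):ℤ)) • h)) hmemA
        rw [Submodule.map_span] at hmap
        refine Submodule.span_le.mpr ?_ hmap
        rintro φ ⟨ψ, ⟨z, ⟨hz0, hzj⟩, rfl⟩, rfl⟩
        rw [hTv]
        set t' : ℕ := (z + ((t:ℤ) - ((j:ℕ):ℤ))).toNat with ht'
        have ht'eq : ((t':ℕ):ℤ) = z + ((t:ℤ) - ((j:ℕ):ℤ)) := by omega
        have ht'lt : t' < t := by omega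
        have := IH t' ht'lt
        rw [ht'eq] at this
        exact this
  -- all integer translates lie in V
  have hdown : ∀ t : ℕ, ∀ m : ℤ, ((j0:ℕ):ℤ) - t ≤ m → v m ∈ V := by
    intro t
    induction t with
    | zero =>
      intro m hm
      have h0 : 0 ≤ m := le_trans (by omega) hm
      have := hup m.toNat
      rwa [Int.toNat_of_nonneg h0] at this
    | succ t IH =>
      intro m hm
      rcases le_or_gt (((j0:ℕ):ℤ) - t) m with hc | hc
      · exact IH m hc
      · have heq : v m = Tsl ((m - ((j0:ℕ):ℤ)) • h) (v ((j0:ℕ):ℤ)) := by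
          rw [hTv]; congr 1; ring
        rw [heq]
        have hmap := Submodule.mem_map_of_mem (f := Tsl ((m - ((j0:ℕ):ℤ)) • h)) hmemB
        rw [Submodule.map_span] at hmap
        refine Submodule.span_le.mpr ?_ hmap
        rintro φ ⟨ψ, ⟨z, ⟨hz0, hzj⟩, rfl⟩, rfl⟩
        rw [hTv]
        exact IH _ (by omega)
  intro m
  exact hdown ((((j0:ℕ):ℤ)) - m).toNat m (by omega)

theorem translates_lie_in_finite_dimensional_space
    {d s : ℕ} (f : (Fin d → ℝ) → ℂ) (h : Fin s → (Fin d → ℝ))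
    (n : Fin s → ℕ) (hn : ∀ i, 1 ≤ n i)
    (hspan : ∀ i, Module.finrank ℂ
      (Submodule.span ℂ (Set.range fun k : Fin (n i + 1) =>
        fun x : Fin d → ℝ => f (x + (k : ℕ) • h i))) ≤ n i) :
    (∀ m : Fin s → ℤ,
      (fun x => f (x + ∑ i, m i • h i)) ∈
        Submodule.span ℂ (Set.range fun a : (∀ i : Fin s, Fin (n i)) =>
          fun x : Fin d → ℝ => f (x + ∑ i, (a i : ℕ) • h i))) ∧
    Module.finrank ℂ
      (Submodule.span ℂ {φ : (Fin d → ℝ) → ℂ |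
        ∃ g ∈ AddSubgroup.closure (Set.range h), φ = fun x => f (x + g)}) ≤ ∏ i, n i := by
  classical
  set W : Submodule ℂ ((Fin d → ℝ) → ℂ) :=
    Submodule.span ℂ (Set.range fun a : (∀ i : Fin s, Fin (n i)) =>
      fun x : Fin d → ℝ => f (x + ∑ i, (a i : ℕ) • h i)) with hW
  have key : ∀ t : ℕ, ∀ m : Fin s → ℤ,
      (∀ j : Fin s, t ≤ (j:ℕ) → 0 ≤ m j ∧ m j < n j) →
      (fun x => f (x + ∑ i, m i • h i)) ∈ W := by
    intro t
    induction t with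
    | zero =>
      intro m hm
      have hb : ∀ j, 0 ≤ m j ∧ m j < n j := fun j => hm j (Nat.zero_le _)
      set a : ∀ i : Fin s, Fin (n i) := fun i => ⟨(m i).toNat, by have := hb i; omega⟩ with ha
      have : (fun x => f (x + ∑ i, m i • h i))
          = fun x : Fin d → ℝ => f (x + ∑ i, ((a i : ℕ)) • h i) := by
        funext x
        congr 1
        congr 1
        apply Finset.sum_congr rfl
        intro i _
        have h0 := (hb i).1
        rw [ha]
        simp only
        rw [← natCast_zsmul, Int.toNat_of_nonneg h0]
      rw [this, hW]
      exact Submodule.subset_span ⟨a, rfl⟩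
    | succ t IH =>
      intro m hm
      by_cases hts : t < s
      · set i : Fin s := ⟨t, hts⟩ with hi
        set g : Fin d → ℝ := ∑ jj ∈ Finset.univ.erase i, m jj • h jj with hg
        have hsplit : ∑ jj, m jj • h jj = m i • h i + g := by
          rw [hg]
          exact (Finset.add_sum_erase Finset.univ (fun jj => m jj • h jj) (Finset.mem_univ i)).symm
        have heq : (fun x => f (x + ∑ jj, m jj • h jj))
            = Tsl g (fun x => f (x + m i • h i)) := by
          funext x
          rw [Tsl_apply, hsplit]
          congr 1
          rw [add_assoc, add_comm g]
        rw [heq]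
        have hone := key_one f (h i) (n i) (hspan i) (m i)
        have hmap := Submodule.mem_map_of_mem (f := Tsl g) hone
        rw [Submodule.map_span] at hmap
        refine Submodule.span_le.mpr ?_ hmap
        rintro φ ⟨ψ, ⟨k, rfl⟩, rfl⟩
        set m' : Fin s → ℤ := Function.update m i ((k:ℕ):ℤ) with hm'
        have hφ : Tsl g (fun x : Fin d → ℝ => f (x + (k:ℕ) • h i))
            = fun x => f (x + ∑ jj, m' jj • h jj) := by
          funext x
          rw [Tsl_apply]
          congr 1
          have hsum' : ∑ jj, m' jj • h jj = m' i • h i + ∑ jj ∈ Finset.univ.erase i, m' jj • h jj :=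
            (Finset.add_sum_erase Finset.univ (fun jj => m' jj • h jj) (Finset.mem_univ i)).symm
          have herase : ∑ jj ∈ Finset.univ.erase i, m' jj • h jj = g := by
            rw [hg]
            apply Finset.sum_congr rfl
            intro jj hjj
            rw [hm', Function.update_of_ne (Finset.ne_of_mem_erase hjj)]
          rw [hsum', herase, hm', Function.update_self, natCast_zsmul, add_assoc, add_comm g]
        rw [hφ]
        apply IH
        intro jj hjj
        by_cases hji : jj = i
        · subst hji
          rw [hm', Function.update_self]
          constructor
          · exact Int.natCast_nonneg _
          · exact_mod_cast k.isLt
        · rw [hm', Function.update_of_ne hji]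
          apply hm
          have : (jj:ℕ) ≠ t := fun he => hji (Fin.ext (by rw [hi]; exact he))
          omega
      · exact IH m (fun j hj => by have := j.isLt; omega)
  have part1 : ∀ m : Fin s → ℤ,
      (fun x => f (x + ∑ i, m i • h i)) ∈ W :=
    fun m => key s m (fun j hj => by have := j.isLt; omega)
  refine ⟨part1, ?_⟩
  have hsub : Submodule.span ℂ {φ : (Fin d → ℝ) → ℂ |
      ∃ g ∈ AddSubgroup.closure (Set.range h), φ = fun x => f (x + g)} ≤ W := by
    apply Submodule.span_le.mpr
    rintro φ ⟨g, hg, rfl⟩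
    have hg' : g ∈ Submodule.span ℤ (Set.range h) := by
      have hle : AddSubgroup.closure (Set.range h) ≤
          (Submodule.span ℤ (Set.range h)).toAddSubgroup :=
        (AddSubgroup.closure_le _).mpr (fun x hx => Submodule.subset_span hx)
      exact hle hg
    obtain ⟨m, hm⟩ := (mem_span_range_iff_exists_fun ℤ).1 hg'
    have := part1 m
    rw [hm] at this
    exact this
  have hfin : Module.Finite ℂ W := by
    rw [hW]
    exact FiniteDimensional.span_of_finite ℂ (Set.finite_range _)
  refine le_trans (Submodule.finrank_mono hsub) ?_
  rw [hW]
  refine le_trans (finrank_range_le_card _) ?_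
  simp [Fintype.card_pi]
end

section
/- Let f : ℝ^d → ℂ be a continuous function, let W be a finite-dimensional complex subspace of the space of functions from ℝ^d to ℂ, and let G be a dense additive subgroup of ℝ^d. If τ_g f ∈ W for every g ∈ G, then τ_h f ∈ W for every h ∈ ℝ^d. -/
/-! The map `h ↦ τ_h f` is continuous into the product topology when `f` is continuous, and a
finite-dimensional subspace is closed there; so `{h | τ_h f ∈ W}` is a closed set containing the
dense set `G`, hence everything. -/

theorem continuous_translate {M E : Type*} [TopologicalSpace M] [Add M] [ContinuousAdd M]
    [TopologicalSpace E] {f : M → E} (hf : Continuous f) :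
    Continuous fun h : M => fun x => f (x + h) :=
  continuous_pi fun _ => hf.comp (continuous_const.add continuous_id)

theorem translate_mem_of_dense_subgroup_translates_mem
    {d : ℕ} (f : (Fin d → ℝ) → ℂ) (hf : Continuous f)
    (W : Submodule ℂ ((Fin d → ℝ) → ℂ)) (hW : FiniteDimensional ℂ W)
    (G : AddSubgroup (Fin d → ℝ)) (hG : Dense (G : Set (Fin d → ℝ)))
    (hmem : ∀ g ∈ G, (fun x => f (x + g)) ∈ W) :
    ∀ h : Fin d → ℝ, (fun x => f (x + h)) ∈ W := by
  have hW_closed : IsClosed (W : Set ((Fin d → ℝ) → ℂ)) := W.closed_of_finiteDimensional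
  exact hG.induction hmem (hW_closed.preimage (continuous_translate hf))
end

section
/- For every integer d ≥ 2, the function f : ℝ^d → ℂ defined by f(x_1,...,x_d) = exp(x_1 x_2 ··· x_d) is NOT an exponential polynomial in d variables, although for each k ∈ {1,...,d} and each fixed point (a_1,...,a_{k-1},a_{k+1},...,a_d) ∈ ℝ^{d-1}, the one-variable function x_k ↦ f(a_1,...,a_{k-1},x_k,a_{k+1},...,a_d) is an exponential polynomial on ℝ. -/
/-!
Restricted to the diagonal `x = (t, …, t)`, an exponential polynomial in `d` variables becomes
one in a single variable, whereas `exp (x₁ ⋯ x_d)` becomes `exp (t ^ d)`. Every one-variable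
exponential polynomial `∑ Qⱼ(t) exp (μⱼ t)` is `o(exp (t ^ d))` as `t → ∞` once `d ≥ 2`, since
`|tⁿ exp (μ t)| ≤ tⁿ exp (Re μ · t)` and `Re μ · t - t ^ d ≤ -t` for large `t`.
Along each coordinate line, on the other hand, `exp (x₁ ⋯ x_d)` is `exp (c t)` for a constant `c`.
-/

open Filter Topology

/-- `g : ℝ → ℂ` is an exponential polynomial: a finite sum of terms
`Q_j(t) * exp(μ_j t)` with `Q_j` complex polynomials and `μ_j ∈ ℂ`. -/
def IsExpPoly1 (g : ℝ → ℂ) : Prop :=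
  ∃ (m : ℕ) (Q : Fin m → Polynomial ℂ) (mu : Fin m → ℂ),
    ∀ t : ℝ, g t = ∑ j, Polynomial.eval (t : ℂ) (Q j) * Complex.exp (mu j * t)

lemma Real.tendsto_pow_mul_exp_mul_sub_pow_atTop {d : ℕ} (hd : 2 ≤ d) (c : ℝ) (n : ℕ) :
    Tendsto (fun t : ℝ => t ^ n * Real.exp (c * t - t ^ d)) atTop (𝓝 0) := by
  refine tendsto_of_tendsto_of_tendsto_of_le_of_le' tendsto_const_nhds
    (Real.tendsto_pow_mul_exp_neg_atTop_nhds_zero n) ?_ ?_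
  · filter_upwards [eventually_ge_atTop 0] with t ht
    positivity
  · filter_upwards [eventually_ge_atTop 1, eventually_ge_atTop (c + 1)] with t ht1 htc
    have ht0 : 0 ≤ t := zero_le_one.trans ht1
    have h_sq : t ^ 2 ≤ t ^ d := pow_le_pow_right₀ ht1 hd
    have h_lin : (c + 1) * t ≤ t * t := mul_le_mul_of_nonneg_right htc ht0
    have h_exp : c * t - t ^ d ≤ -t := by nlinarith
    gcongr

lemma Complex.tendsto_pow_mul_exp_mul_mul_exp_neg_pow_atTop {d : ℕ} (hd : 2 ≤ d) (μ : ℂ)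
    (n : ℕ) :
    Tendsto (fun t : ℝ => (t : ℂ) ^ n * Complex.exp (μ * t) * Complex.exp (-(t : ℂ) ^ d))
      atTop (𝓝 0) := by
  rw [tendsto_zero_iff_norm_tendsto_zero]
  refine (Real.tendsto_pow_mul_exp_mul_sub_pow_atTop hd μ.re n).congr' ?_
  filter_upwards [eventually_ge_atTop 0] with t ht
  rw [mul_assoc, ← Complex.exp_add, norm_mul, norm_pow, Complex.norm_real,
    Real.norm_of_nonneg ht, Complex.norm_exp]
  congr 2
  simp [← Complex.ofReal_pow, sub_eq_add_neg]

lemma isExpPoly1_exp_mul (μ : ℂ) : IsExpPoly1 (fun t : ℝ => Complex.exp (μ * t)) :=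
  ⟨1, fun _ => 1, fun _ => μ, by simp⟩

lemma IsExpPoly1.tendsto_mul_exp_neg_pow_atTop {g : ℝ → ℂ} (hg : IsExpPoly1 g) {d : ℕ}
    (hd : 2 ≤ d) : Tendsto (fun t : ℝ => g t * Complex.exp (-(t : ℂ) ^ d)) atTop (𝓝 0) := by
  obtain ⟨m, Q, mu, hg⟩ := hg
  have h_expand : ∀ t : ℝ, g t * Complex.exp (-(t : ℂ) ^ d) =
      ∑ j, ∑ n ∈ Finset.range ((Q j).natDegree + 1), (Q j).coeff n *
        ((t : ℂ) ^ n * Complex.exp (mu j * t) * Complex.exp (-(t : ℂ) ^ d)) := by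
    intro t
    simp only [hg, Polynomial.eval_eq_sum_range, Finset.sum_mul, mul_assoc]
  simp_rw [h_expand]
  simpa using tendsto_finsetSum _ fun j _ => tendsto_finsetSum _ fun n _ =>
    (Complex.tendsto_pow_mul_exp_mul_mul_exp_neg_pow_atTop hd (mu j) n).const_mul ((Q j).coeff n)

lemma not_isExpPoly1_exp_pow {d : ℕ} (hd : 2 ≤ d) :
    ¬ IsExpPoly1 (fun t : ℝ => Complex.exp ((t : ℂ) ^ d)) := by
  intro h
  have h_one : Tendsto (fun _ : ℝ => (1 : ℂ)) atTop (𝓝 0) := by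
    simpa [← Complex.exp_add] using h.tendsto_mul_exp_neg_pow_atTop hd
  exact one_ne_zero (tendsto_nhds_unique tendsto_const_nhds h_one)

lemma MvPolynomial.eval_const_eq_eval_aeval_X {σ R : Type*} [CommSemiring R]
    (p : MvPolynomial σ R) (x : R) :
    MvPolynomial.eval (fun _ => x) p =
      Polynomial.eval x (MvPolynomial.aeval (fun _ => Polynomial.X) p) := by
  induction p using MvPolynomial.induction_on <;> simp_all

lemma IsExpPoly.comp_diagonal {d : ℕ} {f : (Fin d → ℝ) → ℂ} (hf : IsExpPoly f) :
    IsExpPoly1 (fun t : ℝ => f (fun _ => t)) := by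
  obtain ⟨m, P, lam, hf⟩ := hf
  refine ⟨m, fun k => MvPolynomial.aeval (fun _ => Polynomial.X) (P k),
    fun k => ∑ i, lam k i, fun t => ?_⟩
  simp [hf, MvPolynomial.eval_const_eq_eval_aeval_X, Finset.sum_mul]

lemma prod_ofReal_update {d : ℕ} (a : Fin d → ℝ) (k : Fin d) (t : ℝ) :
    ∏ i, ((Function.update a k t i : ℝ) : ℂ) = (∏ i ∈ Finset.univ.erase k, (a i : ℂ)) * t := by
  rw [← Complex.ofReal_prod, Finset.prod_update_of_mem (Finset.mem_univ k)]
  push_cast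
  rw [mul_comm, Finset.sdiff_singleton_eq_erase]

theorem exp_prod_separately_but_not_jointly_expPoly
    {d : ℕ} (hd : 2 ≤ d) :
    ¬ IsExpPoly (fun x : Fin d → ℝ => Complex.exp (∏ i, (x i : ℂ))) ∧
    ∀ (k : Fin d) (a : Fin d → ℝ),
      IsExpPoly1 (fun t : ℝ =>
        Complex.exp (∏ i, ((Function.update a k t) i : ℂ))) := by
  refine ⟨fun h => not_isExpPoly1_exp_pow hd ?_, fun k a => ?_⟩
  · simpa using h.comp_diagonal
  · simpa only [prod_ofReal_update] using isExpPoly1_exp_mul _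
end
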